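/- arXiv:math/0703520 — 5 statements merged into one kernel-verified Lean document; each statement's English description precedes it below -/
import Mathlib

section
/- For all real r ≥ 1 and z ∈ ℝ with |z| ≤ r, one has 0 ≤ e^{-z} - (1 - z/r)^r ≤ (z²/r)·e^{-z}. -/
theorem stmt_1 (r z : ℝ) (hr : 1 ≤ r) (hz : |z| ≤ r) :
    0 ≤ Real.exp (-z) - (1 - z / r) ^ r ∧
    Real.exp (-z) - (1 - z / r) ^ r ≤ z ^ 2 / r * Real.exp (-z) := by
  have hr0 : (0 : ℝ) < r := lt_of_lt_of_le one_pos hr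
  set x : ℝ := z / r with hxdef
  have hx1 : |x| ≤ 1 := by
    rw [abs_div, abs_of_pos hr0]
    exact div_le_one_of_le₀ hz hr0.le
  have hxle : x ≤ 1 := le_of_abs_le hx1
  have hxge : -1 ≤ x := neg_le_of_abs_le hx1
  have h1x : (0 : ℝ) ≤ 1 - x := by linarith
  have hxr : x * r = z := div_mul_cancel₀ z hr0.ne'
  constructor
  · have h1 : 1 - x ≤ Real.exp (-x) := by
      have := Real.add_one_le_exp (-x)
      linarith
    have h2 : (1 - x) ^ r ≤ (Real.exp (-x)) ^ r :=
      Real.rpow_le_rpow h1x h1 hr0.le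
    have h3 : (Real.exp (-x)) ^ r = Real.exp (-z) := by
      rw [← Real.exp_mul]
      rw [← hxr]
      ring_nf
    linarith [h2.trans_eq h3]
  · -- need exp(-z) * (1 - z^2/r) ≤ (1-x)^r
    have hb : 1 + r * (-(x ^ 2)) ≤ (1 + -(x ^ 2)) ^ r := by
      apply one_add_mul_self_le_rpow_one_add _ hr
      nlinarith [sq_abs x, abs_nonneg x]
    have hfact : (1 - x ^ 2) = (1 - x) * (1 + x) := by ring
    have hex : 1 + x ≤ Real.exp x := by linarith [Real.add_one_le_exp x]
    have h1x' : (1 : ℝ) + x ≥ 0 := by linarith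
    have hmul : (1 - x ^ 2) ^ r ≤ ((1 - x) * Real.exp x) ^ r := by
      apply Real.rpow_le_rpow (by nlinarith [sq_abs x, abs_nonneg x])
      · rw [hfact]; exact mul_le_mul_of_nonneg_left hex h1x
      · exact hr0.le
    have hsplit : ((1 - x) * Real.exp x) ^ r = (1 - x) ^ r * Real.exp z := by
      rw [Real.mul_rpow h1x (Real.exp_nonneg x), ← Real.exp_mul, hxr]
    have key : 1 - r * x ^ 2 ≤ (1 - x) ^ r * Real.exp z := by
      have := hb.trans hmul
      rw [hsplit] at this
      linarith
    have hrx2 : r * x ^ 2 = z ^ 2 / r := by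
      field_simp [hxdef]
      rw [← hxr]; ring
    have hez : (0 : ℝ) < Real.exp (-z) := Real.exp_pos _
    have := mul_le_mul_of_nonneg_left key hez.le
    rw [mul_comm ((1 - x) ^ r) (Real.exp z), ← mul_assoc, ← Real.exp_add] at this
    simp only [neg_add_cancel, Real.exp_zero, one_mul] at this
    rw [hrx2] at this
    nlinarith [this]
end

section
/- For all real r, z > 0, one has (1 + z/r)^r ≤ e^z ≤ (1 + z/r)^{r + z/2}. -/
open Real

lemma key_log (x : ℝ) (hx : 0 ≤ x) : x ≤ (1 + x / 2) * Real.log (1 + x) := by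
  set f : ℝ → ℝ := fun y => (1 + y / 2) * Real.log (1 + y) - y with hf
  have hderiv : ∀ y : ℝ, 0 < 1 + y →
      HasDerivAt f ((1 / 2) * Real.log (1 + y) + (1 + y / 2) * (1 / (1 + y)) - 1) y := by
    intro y hy
    have h1 : HasDerivAt (fun t : ℝ => 1 + t) 1 y := by
      simpa using (hasDerivAt_id y).const_add 1
    have hlog : HasDerivAt (fun t : ℝ => Real.log (1 + t)) (1 / (1 + y)) y := by
      simpa using h1.log (ne_of_gt hy)
    have h2 : HasDerivAt (fun t : ℝ => 1 + t / 2) (1 / 2) y := by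
      simpa using ((hasDerivAt_id y).div_const 2).const_add 1
    have := (h2.mul hlog).sub (hasDerivAt_id y)
    convert this using 1
    all_goals rfl
  have hmono : MonotoneOn f (Set.Ici 0) := by
    apply monotoneOn_of_deriv_nonneg (convex_Ici 0)
    · apply ContinuousOn.sub _ continuousOn_id
      apply ContinuousOn.mul (by fun_prop)
      apply ContinuousOn.log (by fun_prop)
      intro y hy
      simp only [Set.mem_Ici] at hy
      positivity
    · intro y hy
      rw [interior_Ici] at hy
      exact ((hderiv y (by simp only [Set.mem_Ioi] at hy; linarith)).differentiableAt).differentiableWithinAt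
    · intro y hy
      rw [interior_Ici] at hy
      simp only [Set.mem_Ioi] at hy
      have hy1 : 0 < 1 + y := by linarith
      rw [(hderiv y hy1).deriv]
      have hl : 1 - (1 + y)⁻¹ ≤ Real.log (1 + y) := Real.one_sub_inv_le_log_of_pos hy1
      have hinv : (1 + y)⁻¹ = 1 / (1 + y) := by rw [one_div]
      have h2 : (1 + y / 2) * (1 / (1 + y)) - 1 = -(y / 2) * (1 / (1 + y)) := by
        field_simp
        ring
      have hll : 1 - 1 / (1 + y) ≤ Real.log (1 + y) := by rwa [← hinv]
      have h3 : 1 - 1 / (1 + y) = y * (1 / (1 + y)) := by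
        field_simp
        ring
      nlinarith [hll, h2, h3]
  have h0 : f 0 = 0 := by simp [hf]
  have := hmono (Set.self_mem_Ici) (Set.mem_Ici.mpr hx) hx
  rw [h0] at this
  simp only [hf] at this
  linarith

theorem stmt_2 (r z : ℝ) (hr : 0 < r) (hz : 0 < z) :
    (1 + z / r) ^ r ≤ Real.exp z ∧ Real.exp z ≤ (1 + z / r) ^ (r + z / 2) := by
  have hb : (0:ℝ) < 1 + z / r := by positivity
  have hrw : ∀ s : ℝ, (1 + z / r) ^ s = Real.exp (s * Real.log (1 + z / r)) := fun s => by
    rw [Real.rpow_def_of_pos hb s, mul_comm]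
  constructor
  · rw [hrw, Real.exp_le_exp]
    have h1 : Real.log (1 + z / r) ≤ z / r := by
      have := Real.log_le_sub_one_of_pos hb
      linarith
    calc r * Real.log (1 + z / r) ≤ r * (z / r) := by nlinarith
      _ = z := by field_simp
  · rw [hrw, Real.exp_le_exp]
    have h1 : z / r ≤ (1 + (z / r) / 2) * Real.log (1 + z / r) :=
      key_log (z / r) (by positivity)
    have h2 : r * (z / r) ≤ r * ((1 + (z / r) / 2) * Real.log (1 + z / r)) := by nlinarith
    have h3 : r * (z / r) = z := by field_simp
    have h4 : r * ((1 + (z / r) / 2) * Real.log (1 + z / r))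
        = (r + z / 2) * Real.log (1 + z / r) := by
      field_simp
    linarith [h2, h3.symm ▸ h2]
end

section
/- Let a₁,…,a_q be nonnegative reals and μ > 1 with a_i ≤ μ for all i. Then 0 ≤ exp(-(a₁+⋯+a_q)) - ∏_{i=1}^q (1 - a_i/μ)^μ ≤ (1/μ)·(a₁²+⋯+a_q²)·exp(-(a₁+⋯+a_q)). -/
open Finset in
lemma weier_aux {ι : Type*} (s : Finset ι) (t : ι → ℝ) (h0 : ∀ i ∈ s, 0 ≤ t i)
    (h1 : ∀ i ∈ s, t i ≤ 1) : 1 - ∑ i ∈ s, t i ≤ ∏ i ∈ s, (1 - t i) := by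
  induction s using Finset.cons_induction with
  | empty => simp
  | cons i s hi ih =>
    rw [Finset.sum_cons, Finset.prod_cons]
    have h0i := h0 i (Finset.mem_cons_self i s)
    have h1i := h1 i (Finset.mem_cons_self i s)
    have ih' := ih (fun j hj => h0 j (Finset.mem_cons_of_mem hj))
      (fun j hj => h1 j (Finset.mem_cons_of_mem hj))
    have hs : 0 ≤ ∑ j ∈ s, t j := Finset.sum_nonneg fun j hj => h0 j (Finset.mem_cons_of_mem hj)
    nlinarith [ih']

lemma pointwise_upper {a μ : ℝ} (hμ : 0 < μ) (ha : 0 ≤ a) (haμ : a ≤ μ) :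
    (1 - a / μ) ^ μ ≤ Real.exp (-a) := by
  have h1 : (0:ℝ) ≤ 1 - a / μ := by
    rw [sub_nonneg, div_le_one hμ]; exact haμ
  have h2 : 1 - a / μ ≤ Real.exp (-(a / μ)) := by
    linarith [Real.add_one_le_exp (-(a / μ))]
  calc (1 - a / μ) ^ μ ≤ Real.exp (-(a / μ)) ^ μ :=
        Real.rpow_le_rpow h1 h2 hμ.le
    _ = Real.exp (-a) := by
        rw [← Real.exp_mul]; field_simp

lemma pointwise_lower {a μ : ℝ} (hμ : 1 ≤ μ) (ha : 0 ≤ a) (haμ : a ≤ μ) :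
    Real.exp (-a) * (1 - a ^ 2 / μ) ≤ (1 - a / μ) ^ μ := by
  have hμ0 : (0:ℝ) < μ := lt_of_lt_of_le one_pos hμ
  set x := a / μ with hx
  have hx0 : 0 ≤ x := div_nonneg ha hμ0.le
  have hx1 : x ≤ 1 := by rw [hx, div_le_one hμ0]; exact haμ
  have key : (1 - x ^ 2) * Real.exp (-x) ≤ 1 - x := by
    have he : 1 + x ≤ Real.exp x := by linarith [Real.add_one_le_exp x]
    have hp : Real.exp (-x) > 0 := Real.exp_pos _
    have : (1 - x ^ 2) ≤ (1 - x) * Real.exp x := by nlinarith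
    calc (1 - x ^ 2) * Real.exp (-x) ≤ (1 - x) * Real.exp x * Real.exp (-x) := by
          apply mul_le_mul_of_nonneg_right this hp.le
      _ = 1 - x := by rw [mul_assoc, ← Real.exp_add]; simp
  have hsq : (0:ℝ) ≤ 1 - x ^ 2 := by nlinarith
  have hexp : (0:ℝ) ≤ Real.exp (-x) := (Real.exp_pos _).le
  have step1 : ((1 - x ^ 2) * Real.exp (-x)) ^ μ ≤ (1 - x) ^ μ :=
    Real.rpow_le_rpow (mul_nonneg hsq hexp) key (le_trans zero_le_one hμ)
  have step2 : ((1 - x ^ 2) * Real.exp (-x)) ^ μ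
      = (1 - x ^ 2) ^ μ * Real.exp (-a) := by
    rw [Real.mul_rpow hsq hexp, ← Real.exp_mul]
    congr 2
    rw [hx]; field_simp
  have bern : 1 + μ * (-(x ^ 2)) ≤ (1 + -(x ^ 2)) ^ μ :=
    one_add_mul_self_le_rpow_one_add (by nlinarith) hμ
  have hμx : μ * x ^ 2 = a ^ 2 / μ := by rw [hx]; field_simp
  have bern' : 1 - a ^ 2 / μ ≤ (1 - x ^ 2) ^ μ := by
    have := bern
    rw [← hμx]
    calc 1 - μ * x ^ 2 = 1 + μ * (-(x ^ 2)) := by ring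
      _ ≤ (1 + -(x ^ 2)) ^ μ := bern
      _ = (1 - x ^ 2) ^ μ := by ring_nf
  calc Real.exp (-a) * (1 - a ^ 2 / μ) ≤ Real.exp (-a) * (1 - x ^ 2) ^ μ :=
        mul_le_mul_of_nonneg_left bern' (Real.exp_pos _).le
    _ = ((1 - x ^ 2) * Real.exp (-x)) ^ μ := by rw [step2]; ring
    _ ≤ (1 - x) ^ μ := step1

theorem stmt_3 (q : ℕ) (a : Fin q → ℝ) (μ : ℝ) (hμ : 1 < μ)
    (ha : ∀ i, 0 ≤ a i) (haμ : ∀ i, a i ≤ μ) :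
    0 ≤ Real.exp (-(∑ i, a i)) - ∏ i, (1 - a i / μ) ^ μ ∧
    Real.exp (-(∑ i, a i)) - ∏ i, (1 - a i / μ) ^ μ ≤
      (1 / μ) * (∑ i, (a i) ^ 2) * Real.exp (-(∑ i, a i)) := by
  have hμ0 : (0:ℝ) < μ := lt_trans one_pos hμ
  have hexpS : Real.exp (-(∑ i, a i)) = ∏ i, Real.exp (-(a i)) := by
    rw [← Real.exp_sum, ← Finset.sum_neg_distrib]
  have hfac0 : ∀ i : Fin q, (0:ℝ) ≤ (1 - a i / μ) ^ μ := fun i =>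
    Real.rpow_nonneg (by rw [sub_nonneg, div_le_one hμ0]; exact haμ i) _
  have hupper : ∏ i, (1 - a i / μ) ^ μ ≤ Real.exp (-(∑ i, a i)) := by
    rw [hexpS]
    exact Finset.prod_le_prod (fun i _ => hfac0 i)
      (fun i _ => pointwise_upper hμ0 (ha i) (haμ i))
  have hprod0 : (0:ℝ) ≤ ∏ i, (1 - a i / μ) ^ μ :=
    Finset.prod_nonneg fun i _ => hfac0 i
  refine ⟨by linarith, ?_⟩
  have hT0 : (0:ℝ) ≤ ∑ i, (a i) ^ 2 / μ :=
    Finset.sum_nonneg fun i _ => div_nonneg (sq_nonneg _) hμ0.le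
  by_cases hT : ∑ i, (a i) ^ 2 / μ ≤ 1
  · -- use Weierstrass
    have hti : ∀ i : Fin q, (a i) ^ 2 / μ ≤ 1 := by
      intro i
      calc (a i) ^ 2 / μ ≤ ∑ j, (a j) ^ 2 / μ :=
            Finset.single_le_sum (f := fun j => (a j) ^ 2 / μ) (fun j _ => div_nonneg (sq_nonneg _) hμ0.le)
              (Finset.mem_univ i)
        _ ≤ 1 := hT
    have hlow : Real.exp (-(∑ i, a i)) * (1 - ∑ i, (a i) ^ 2 / μ)
        ≤ ∏ i, (1 - a i / μ) ^ μ := by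
      calc Real.exp (-(∑ i, a i)) * (1 - ∑ i, (a i) ^ 2 / μ)
          ≤ Real.exp (-(∑ i, a i)) * ∏ i, (1 - (a i) ^ 2 / μ) := by
            apply mul_le_mul_of_nonneg_left _ (Real.exp_pos _).le
            exact weier_aux _ _ (fun i _ => div_nonneg (sq_nonneg _) hμ0.le)
              (fun i _ => hti i)
        _ = ∏ i, Real.exp (-(a i)) * (1 - (a i) ^ 2 / μ) := by
            rw [hexpS, ← Finset.prod_mul_distrib]
        _ ≤ ∏ i, (1 - a i / μ) ^ μ := by
            apply Finset.prod_le_prod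
            · intro i _
              have := hti i
              exact mul_nonneg (Real.exp_pos _).le (by linarith)
            · intro i _
              exact pointwise_lower hμ.le (ha i) (haμ i)
    have hsum : ∑ i, (a i) ^ 2 / μ = (1 / μ) * ∑ i, (a i) ^ 2 := by
      rw [Finset.mul_sum]; congr 1; ext i; ring
    rw [hsum] at hlow
    nlinarith [hlow]
  · push_neg at hT
    have hsum : ∑ i, (a i) ^ 2 / μ = (1 / μ) * ∑ i, (a i) ^ 2 := by
      rw [Finset.mul_sum]; congr 1; ext i; ring
    rw [hsum] at hT
    nlinarith [Real.exp_pos (-(∑ i, a i)), hprod0, hupper]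
end

section
/- Let a₁,…,a_q be nonnegative reals, μ > 0, and let m = max_i a_i. Then ∏_{i=1}^q (1 + a_i/μ)^μ ≤ exp(a₁+⋯+a_q) ≤ ∏_{i=1}^q (1 + a_i/μ)^{μ + m/2}. -/
lemma aux_log_ge (t : ℝ) (ht : 0 ≤ t) : t / (1 + t) ≤ Real.log (1 + t) := by
  have h1 : (0:ℝ) < 1 + t := by linarith
  have h2 := Real.log_le_sub_one_of_pos (x := 1/(1+t)) (by positivity)
  rw [Real.log_div one_ne_zero (ne_of_gt h1), Real.log_one] at h2
  have he : t/(1+t) = 1 - 1/(1+t) := by field_simp; ring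
  linarith

lemma aux_key (t : ℝ) (ht : 0 ≤ t) : t ≤ (1 + t / 2) * Real.log (1 + t) := by
  set g : ℝ → ℝ := fun t => (1 + t/2) * Real.log (1 + t) - t with hg
  have hd : ∀ x ∈ Set.Ici (0:ℝ), HasDerivAt g
      ((1/2) * Real.log (1+x) + (1+x/2) * (1/(1+x)) - 1) x := by
    intro x hx
    have h1 : (0:ℝ) < 1 + x := by simp at hx; linarith
    have hlog : HasDerivAt (fun t : ℝ => Real.log (1 + t)) (1/(1+x)) x := by
      have := (Real.hasDerivAt_log (ne_of_gt h1)).comp x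
        ((hasDerivAt_id x).const_add 1)
      simpa [one_div, Function.comp_def] using this
    have hlin : HasDerivAt (fun t : ℝ => 1 + t/2) (1/2) x := by
      simpa using ((hasDerivAt_id x).div_const 2).const_add 1
    have := (hlin.mul hlog).sub (hasDerivAt_id x)
    exact this
  have hmono : MonotoneOn g (Set.Ici 0) := by
    apply monotoneOn_of_deriv_nonneg (convex_Ici 0)
    · exact fun x hx => ((hd x hx).differentiableAt).continuousAt.continuousWithinAt
    · intro x hx
      rw [interior_Ici] at hx
      exact ((hd x (Set.mem_Ici.mpr (le_of_lt hx))).differentiableAt).differentiableWithinAt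
    · intro x hx
      rw [interior_Ici, Set.mem_Ioi] at hx
      rw [(hd x (Set.mem_Ici.mpr (le_of_lt hx))).deriv]
      have h1 : (0:ℝ) < 1 + x := by linarith [hx.le]
      have hl := aux_log_ge x hx.le
      have : x / (1+x) * (1/2) + (1+x/2) * (1/(1+x)) - 1 = 0 := by field_simp; ring
      nlinarith [mul_le_mul_of_nonneg_right hl (by norm_num : (0:ℝ) ≤ 1/2)]
  have h0 : g 0 = 0 := by simp [hg]
  have := hmono (Set.self_mem_Ici) (Set.mem_Ici.mpr ht) ht
  rw [h0] at this
  simpa [hg] using this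

theorem stmt_4 (q : ℕ) (a : Fin q → ℝ) (μ m : ℝ) (hμ : 0 < μ)
    (ha : ∀ i, 0 ≤ a i) (hm : IsGreatest (Set.range a) m) :
    ∏ i, (1 + a i / μ) ^ μ ≤ Real.exp (∑ i, a i) ∧
    Real.exp (∑ i, a i) ≤ ∏ i, (1 + a i / μ) ^ (μ + m / 2) := by
  have hb : ∀ i, (0:ℝ) < 1 + a i / μ := fun i => by have := div_nonneg (ha i) hμ.le; linarith
  have hrw : ∀ c : ℝ, ∏ i, (1 + a i / μ) ^ c =
      Real.exp (∑ i, Real.log (1 + a i / μ) * c) := by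
    intro c
    rw [Real.exp_sum]
    exact Finset.prod_congr rfl fun i _ => Real.rpow_def_of_pos (hb i) c
  constructor
  · rw [hrw, Real.exp_le_exp]
    apply Finset.sum_le_sum
    intro i _
    have hlog : Real.log (1 + a i / μ) ≤ a i / μ := by
      have := Real.log_le_sub_one_of_pos (hb i)
      linarith
    calc Real.log (1 + a i / μ) * μ ≤ (a i / μ) * μ :=
          mul_le_mul_of_nonneg_right hlog hμ.le
      _ = a i := by field_simp
  · rw [hrw, Real.exp_le_exp]
    apply Finset.sum_le_sum
    intro i _
    have hkey := aux_key (a i / μ) (div_nonneg (ha i) hμ.le)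
    have him : a i ≤ m := hm.2 ⟨i, rfl⟩
    have hlognn : 0 ≤ Real.log (1 + a i / μ) := Real.log_nonneg (by
      have := div_nonneg (ha i) hμ.le; linarith)
    have h1 : a i ≤ (μ + a i / 2) * Real.log (1 + a i / μ) := by
      have := mul_le_mul_of_nonneg_right hkey hμ.le
      calc a i = (a i / μ) * μ := by field_simp
        _ ≤ (1 + a i / μ / 2) * Real.log (1 + a i / μ) * μ := this
        _ = (μ + a i / 2) * Real.log (1 + a i / μ) := by field_simp
    calc a i ≤ (μ + a i / 2) * Real.log (1 + a i / μ) := h1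
      _ ≤ (μ + m / 2) * Real.log (1 + a i / μ) :=
          mul_le_mul_of_nonneg_right (by linarith) hlognn
      _ = Real.log (1 + a i / μ) * (μ + m / 2) := mul_comm _ _
end

section
/- Let q ∈ ℕ, d ∈ {1,2,4}, and for a partition λ = (λ₁ ≥ ⋯ ≥ λ_q ≥ 0) in ℕ^q define the generalized Pochhammer symbol (μ)_λ = ∏_{j=1}^q (μ - (d/2)(j-1))_{λ_j}, where (a)_n = a(a+1)⋯(a+n-1). Then for all μ > d(q - 1/2), one has μ^{|λ|}/(μ)_λ ≤ 2^{dq(q-1)/2}, where |λ| = λ₁ + ⋯ + λ_q. -/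
/-- The generalized Pochhammer symbol `(μ)_λ = ∏_{j=1}^q (μ - (d/2)(j-1))_{λ_j}`,
where `(a)_n` is the rising factorial. -/
noncomputable def genPochhammer (d q : ℕ) (μ : ℝ) (lam : Fin q → ℕ) : ℝ :=
  ∏ j : Fin q, (ascPochhammer ℝ (lam j)).eval (μ - (d : ℝ) / 2 * (j : ℕ))

/-!
Each factor `(μ - d j / 2)_{λ_j}` of `(μ)_λ` is compared with `μ ^ λ_j` termwise: the `k`-th term
`μ - d j / 2 + k` is at least `μ / 2` (as `d j < μ`), and at least `μ` once `k ≥ d j`. Hence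
`μ ^ λ_j ≤ 2 ^ (d j) (μ - d j / 2)_{λ_j}`, and multiplying over `j` gives the factor
`2 ^ (d (0 + 1 + ⋯ + (q - 1))) = 2 ^ (d q (q - 1) / 2)`.
-/

lemma pow_le_two_pow_min_mul_ascPochhammer_eval {μ a : ℝ} {m : ℕ} (hμ : 0 < μ)
    (h2a : μ ≤ 2 * a) (ham : μ ≤ a + m) (n : ℕ) :
    μ ^ n ≤ 2 ^ min n m * (ascPochhammer ℝ n).eval a := by
  induction n with
  | zero => simp
  | succ n ih =>
    have hP : 0 ≤ 2 ^ min n m * (ascPochhammer ℝ n).eval a :=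
      mul_nonneg (by positivity) (ascPochhammer_pos n a (by linarith)).le
    have hn : (0 : ℝ) ≤ n := n.cast_nonneg
    rw [pow_succ, ascPochhammer_succ_eval]
    by_cases hnm : n < m
    · have hmin : min (n + 1) m = min n m + 1 := by omega
      calc μ ^ n * μ ≤ (2 ^ min n m * (ascPochhammer ℝ n).eval a) * (2 * (a + n)) :=
            mul_le_mul ih (by linarith) hμ.le hP
        _ = _ := by rw [hmin, pow_succ]; ring
    · have hmin : min (n + 1) m = min n m := by omega
      have hmn : (m : ℝ) ≤ n := by exact_mod_cast not_lt.mp hnm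
      calc μ ^ n * μ ≤ (2 ^ min n m * (ascPochhammer ℝ n).eval a) * (a + n) :=
            mul_le_mul ih (by linarith) hμ.le hP
        _ = _ := by rw [hmin]; ring

lemma pow_le_two_pow_mul_ascPochhammer_eval_sub_half {μ : ℝ} {m : ℕ} (hm : (m : ℝ) < μ)
    (n : ℕ) : μ ^ n ≤ 2 ^ m * (ascPochhammer ℝ n).eval (μ - m / 2) := by
  have hμ : 0 < μ := lt_of_le_of_lt m.cast_nonneg hm
  calc μ ^ n ≤ 2 ^ min n m * (ascPochhammer ℝ n).eval (μ - m / 2) :=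
        pow_le_two_pow_min_mul_ascPochhammer_eval hμ (by linarith) (by linarith) n
    _ ≤ 2 ^ m * (ascPochhammer ℝ n).eval (μ - m / 2) := by
        gcongr
        · exact (ascPochhammer_pos n _ (by linarith)).le
        · exact one_le_two
        · exact min_le_right n m

section genPochhammer

variable {d q : ℕ} {μ : ℝ}

lemma genPochhammer_eq_prod_sub_half (lam : Fin q → ℕ) :
    genPochhammer d q μ lam =
      ∏ j : Fin q, (ascPochhammer ℝ (lam j)).eval (μ - ((d * j : ℕ) : ℝ) / 2) := by
  unfold genPochhammer
  congr! 3
  push_cast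
  ring

lemma genPochhammer_pos (h : ∀ j : Fin q, ((d * j : ℕ) : ℝ) < μ) (lam : Fin q → ℕ) :
    0 < genPochhammer d q μ lam := by
  rw [genPochhammer_eq_prod_sub_half]
  refine Finset.prod_pos fun j _ => ascPochhammer_pos _ _ ?_
  have := h j
  have : (0 : ℝ) ≤ ((d * j : ℕ) : ℝ) := Nat.cast_nonneg _
  linarith

lemma pow_sum_le_two_pow_sum_mul_genPochhammer (h : ∀ j : Fin q, ((d * j : ℕ) : ℝ) < μ)
    (lam : Fin q → ℕ) :
    μ ^ (∑ j, lam j) ≤ 2 ^ (∑ j : Fin q, d * j) * genPochhammer d q μ lam := by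
  rw [genPochhammer_eq_prod_sub_half, ← Finset.prod_pow_eq_pow_sum, ← Finset.prod_pow_eq_pow_sum,
    ← Finset.prod_mul_distrib]
  refine Finset.prod_le_prod (fun j _ => ?_) fun j _ =>
    pow_le_two_pow_mul_ascPochhammer_eval_sub_half (h j) _
  exact (pow_pos (lt_of_le_of_lt (Nat.cast_nonneg _) (h j)) _).le

end genPochhammer

lemma sum_fin_mul_val (d q : ℕ) : ∑ j : Fin q, d * (j : ℕ) = d * q * (q - 1) / 2 := by
  rw [← Finset.mul_sum, Fin.sum_univ_eq_sum_range (fun i => i) q, Finset.sum_range_id,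
    mul_assoc, Nat.mul_div_assoc d q.even_mul_pred_self.two_dvd]

theorem stmt_6_general (d q : ℕ) (lam : Fin q → ℕ)
    (μ : ℝ) (hμ : (d : ℝ) * ((q : ℝ) - 1 / 2) < μ) :
    μ ^ (∑ j, lam j) / genPochhammer d q μ lam ≤ 2 ^ (d * q * (q - 1) / 2) := by
  have hdj : ∀ j : Fin q, ((d * j : ℕ) : ℝ) < μ := fun j => by
    have hj : (j : ℝ) + 1 ≤ q := by exact_mod_cast j.2
    have hd0 : (0 : ℝ) ≤ d := d.cast_nonneg
    push_cast
    nlinarith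
  rw [div_le_iff₀ (genPochhammer_pos hdj lam), ← sum_fin_mul_val]
  exact pow_sum_le_two_pow_sum_mul_genPochhammer hdj lam

theorem stmt_6 (d q : ℕ) (hd : d ∈ ({1, 2, 4} : Set ℕ)) (lam : Fin q → ℕ)
    (hlam : Antitone lam) (μ : ℝ) (hμ : (d : ℝ) * ((q : ℝ) - 1 / 2) < μ) :
    μ ^ (∑ j, lam j) / genPochhammer d q μ lam ≤ 2 ^ (d * q * (q - 1) / 2) :=
  stmt_6_general d q lam μ hμ
end
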